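/- arXiv:2401.06098 — 7 statements merged into one kernel-verified Lean document; each statement's English description precedes it below -/
import Mathlib

section
/- Let S and Q be symmetric positive definite n×n real matrices. Then for every n×n real matrix A, the matrix Aᵀ(Q + A S Aᵀ)⁻¹ A − S⁻¹ is negative semidefinite. -/
/-!
Both `S⁻¹ - Aᵀ (Q + A S Aᵀ)⁻¹ A` and `Q` are Schur complements of the same symmetric block matrix
`[[S⁻¹, Aᵀ], [A, Q + A S Aᵀ]]`, taken at its two diagonal blocks. Since both blocks are positive
definite, the block matrix is positive semidefinite iff either Schur complement is, and `Q` is.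
-/

open Matrix

namespace Matrix

variable {m n K : Type*} [Fintype m] [Fintype n] [Field K] [PartialOrder K]
  [StarRing K] [StarOrderedRing K]

lemma PosDef.add_mul_mul_conjTranspose {S : Matrix n n K} {Q : Matrix m m K}
    (hS : S.PosDef) (hQ : Q.PosDef) (A : Matrix m n K) : (Q + A * S * Aᴴ).PosDef :=
  hQ.add_posSemidef (hS.posSemidef.mul_mul_conjTranspose_same A)

lemma PosDef.posSemidef_inv_sub_conjTranspose_mul_inv_mul [DecidableEq m] [DecidableEq n]
    {S : Matrix n n K} {Q : Matrix m m K}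
    (hS : S.PosDef) (hQ : Q.PosDef) (A : Matrix m n K) :
    (S⁻¹ - Aᴴ * (Q + A * S * Aᴴ)⁻¹ * A).PosSemidef := by
  have hM := hS.add_mul_mul_conjTranspose hQ A
  have : Invertible S⁻¹ := hS.inv.isUnit.invertible
  have : Invertible (Q + A * S * Aᴴ) := hM.isUnit.invertible
  have hBlock : (fromBlocks S⁻¹ Aᴴ A (Q + A * S * Aᴴ)).PosSemidef := by
    have : Invertible S := hS.isUnit.invertible
    simpa [hQ.posSemidef] using (PosDef.fromBlocks₁₁ Aᴴ (Q + A * S * Aᴴ) hS.inv).mpr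
  simpa using (PosDef.fromBlocks₂₂ S⁻¹ Aᴴ hM).mp (by simpa using hBlock)

end Matrix

theorem stmt_0 {n : ℕ} (S Q A : Matrix (Fin n) (Fin n) ℝ)
    (hS : S.PosDef) (hQ : Q.PosDef) :
    ∀ x : Fin n → ℝ,
      x ⬝ᵥ ((Aᵀ * (Q + A * S * Aᵀ)⁻¹ * A - S⁻¹).mulVec x) ≤ 0 := by
  intro x
  have h := (hS.posSemidef_inv_sub_conjTranspose_mul_inv_mul hQ A).dotProduct_mulVec_nonneg x
  rw [conjTranspose_eq_transpose_of_trivial] at h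
  rw [← neg_sub, neg_mulVec, dotProduct_neg, neg_nonpos]
  simpa using h
end

section
/- Let f : ℝⁿ → ℝ be convex and W ∈ ℝ^{n×n} symmetric positive definite. If ξ : ℝⁿ → ℝⁿ is a function satisfying ξ(x) ∈ ∂f(x − Wξ(x)) for every x, then ξ is continuous. -/
/-!
The subdifferential of a function is a monotone operator: subgradients `g ∈ ∂f(y)` and
`g' ∈ ∂f(y')` satisfy `⟪g - g', y - y'⟫ ≥ 0`. Applied at `y = x - W ξ(x)` and
`y' = x' - W ξ(x')` this gives `⟪u, W u⟫ ≤ ⟪u, x - x'⟫` for `u = ξ(x) - ξ(x')`. In finite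
dimension a positive definite `W` is coercive, `c ‖u‖² ≤ ⟪u, W u⟫` for some `c > 0`, so
Cauchy–Schwarz makes `ξ` Lipschitz with constant `c⁻¹`.
-/

open Matrix
open scoped RealInnerProductSpace

section

variable {E : Type*} [NormedAddCommGroup E] [InnerProductSpace ℝ E]

def HasSubgradientAt (f : E → ℝ) (g y : E) : Prop :=
  ∀ z, ⟪g, z - y⟫ ≤ f z - f y

theorem HasSubgradientAt.inner_sub_sub_nonneg {f : E → ℝ} {g g' y y' : E}
    (hg : HasSubgradientAt f g y) (hg' : HasSubgradientAt f g' y') :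
    0 ≤ ⟪g - g', y - y'⟫ := by
  have h := hg y'
  have h' := hg' y
  have expand : ⟪g - g', y - y'⟫ = -⟪g, y' - y⟫ - ⟪g', y - y'⟫ := by
    simp only [inner_sub_left, inner_sub_right]
    ring
  linarith

theorem inner_map_sub_le_of_hasSubgradientAt {f : E → ℝ} (T : E →ₗ[ℝ] E) {ξ : E → E}
    (hξ : ∀ x, HasSubgradientAt f (ξ x) (x - T (ξ x))) (x x' : E) :
    ⟪ξ x - ξ x', T (ξ x - ξ x')⟫ ≤ ⟪ξ x - ξ x', x - x'⟫ := by
  have h := (hξ x).inner_sub_sub_nonneg (hξ x')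
  have expand : x - T (ξ x) - (x' - T (ξ x')) = (x - x') - T (ξ x - ξ x') := by
    rw [map_sub]
    abel
  rw [expand, inner_sub_right] at h
  linarith

theorem lipschitzWith_of_hasSubgradientAt {f : E → ℝ} (T : E →ₗ[ℝ] E) {c : ℝ} (hc : 0 < c)
    (hT : ∀ u, c * ‖u‖ ^ 2 ≤ ⟪u, T u⟫) {ξ : E → E}
    (hξ : ∀ x, HasSubgradientAt f (ξ x) (x - T (ξ x))) :
    LipschitzWith (Real.toNNReal c⁻¹) ξ := by
  refine LipschitzWith.of_dist_le_mul fun x x' => ?_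
  rw [Real.coe_toNNReal _ (inv_pos.mpr hc).le, dist_eq_norm, dist_eq_norm,
    le_inv_mul_iff₀ hc]
  set u := ξ x - ξ x'
  have key : c * ‖u‖ * ‖u‖ ≤ ‖x - x'‖ * ‖u‖ :=
    calc c * ‖u‖ * ‖u‖ = c * ‖u‖ ^ 2 := by ring
      _ ≤ ⟪u, T u⟫ := hT u
      _ ≤ ⟪u, x - x'⟫ := inner_map_sub_le_of_hasSubgradientAt T hξ x x'
      _ ≤ ‖u‖ * ‖x - x'‖ := real_inner_le_norm u (x - x')
      _ = ‖x - x'‖ * ‖u‖ := mul_comm _ _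
  rcases (norm_nonneg u).eq_or_lt with hu | hu
  · rw [← hu, mul_zero]
    exact norm_nonneg _
  · exact le_of_mul_le_mul_right key hu

theorem exists_pos_mul_sq_le_inner_map_self [FiniteDimensional ℝ E] (T : E →ₗ[ℝ] E)
    (hT : ∀ u, u ≠ 0 → 0 < ⟪u, T u⟫) : ∃ c > 0, ∀ u, c * ‖u‖ ^ 2 ≤ ⟪u, T u⟫ := by
  rcases subsingleton_or_nontrivial E with hE | hE
  · exact ⟨1, one_pos, fun u => by simp [Subsingleton.elim u 0]⟩
  have hq : Continuous fun u : E => ⟪u, T u⟫ :=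
    continuous_id.inner (LinearMap.continuous_of_finiteDimensional T)
  obtain ⟨v, hv, hmin⟩ := (isCompact_sphere (0 : E) 1).exists_isMinOn
    (NormedSpace.sphere_nonempty.mpr zero_le_one) hq.continuousOn
  have hv0 : v ≠ 0 := ne_zero_of_mem_unit_sphere ⟨v, hv⟩
  refine ⟨⟪v, T v⟫, hT v hv0, fun u => ?_⟩
  rcases eq_or_ne u 0 with rfl | hu
  · simp
  have hnu : 0 < ‖u‖ := norm_pos_iff.mpr hu
  have hsphere : ‖u‖⁻¹ • u ∈ Metric.sphere (0 : E) 1 := by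
    rw [mem_sphere_zero_iff_norm, norm_smul, norm_inv, norm_norm, inv_mul_cancel₀ hnu.ne']
  have hscale : ⟪‖u‖⁻¹ • u, T (‖u‖⁻¹ • u)⟫ = ⟪u, T u⟫ / ‖u‖ ^ 2 := by
    rw [map_smul, real_inner_smul_left, real_inner_smul_right]
    field_simp
  have := isMinOn_iff.mp hmin _ hsphere
  rwa [hscale, le_div_iff₀ (pow_pos hnu 2)] at this

end

theorem Matrix.PosDef.inner_toEuclideanLin_pos {n : Type*} [Fintype n] [DecidableEq n]
    {W : Matrix n n ℝ} (hW : W.PosDef) {u : EuclideanSpace ℝ n} (hu : u ≠ 0) :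
    0 < ⟪u, W.toEuclideanLin u⟫ := by
  have h := hW.re_dotProduct_pos (x := WithLp.equiv 2 (n → ℝ) u) (by simpa using hu)
  simpa [EuclideanSpace.inner_eq_star_dotProduct, Matrix.toLpLin_apply,
    dotProduct_comm] using h

theorem stmt_3_general {n : ℕ} (f : EuclideanSpace ℝ (Fin n) → ℝ)
    (W : Matrix (Fin n) (Fin n) ℝ) (hW : W.PosDef)
    (ξ : EuclideanSpace ℝ (Fin n) → EuclideanSpace ℝ (Fin n))
    (hξ : ∀ x z : EuclideanSpace ℝ (Fin n),
      f z - f (x - W.toEuclideanLin (ξ x)) ≥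
        ⟪ξ x, z - (x - W.toEuclideanLin (ξ x))⟫) :
    Continuous ξ := by
  obtain ⟨c, hc, hcoercive⟩ := exists_pos_mul_sq_le_inner_map_self W.toEuclideanLin
    fun u hu => hW.inner_toEuclideanLin_pos hu
  exact (lipschitzWith_of_hasSubgradientAt W.toEuclideanLin hc hcoercive hξ).continuous

theorem stmt_3 {n : ℕ} (f : EuclideanSpace ℝ (Fin n) → ℝ)
    (hf : ConvexOn ℝ Set.univ f)
    (W : Matrix (Fin n) (Fin n) ℝ) (hW : W.PosDef)
    (ξ : EuclideanSpace ℝ (Fin n) → EuclideanSpace ℝ (Fin n))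
    (hξ : ∀ x z : EuclideanSpace ℝ (Fin n),
      f z - f (x - W.toEuclideanLin (ξ x)) ≥
        ⟪ξ x, z - (x - W.toEuclideanLin (ξ x))⟫) :
    Continuous ξ :=
  stmt_3_general f W hW ξ hξ
end

section
/- For g(z) = α·h_μ(aᵀz + b) on ℝⁿ with a ∈ ℝⁿ, b ∈ ℝ, α > 0, μ > 0 and h_μ the Huber loss, the proximal operator is prox_g(x) = x − α·Sat₁((aᵀx + b)/(μ + α‖a‖²))·a. -/
open scoped RealInnerProductSpace

noncomputable def sat1 (e : ℝ) : ℝ := if |e| ≤ 1 then e else Real.sign e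

noncomputable def huber (μ e : ℝ) : ℝ :=
  if |e| ≤ μ then e ^ 2 / (2 * μ) else |e| - μ / 2

lemma huber_subgrad (μ u v : ℝ) (hμ : 0 < μ) :
    huber μ v + sat1 (v / μ) * (u - v) ≤ huber μ u := by
  have h2μ : (0:ℝ) < 2 * μ := by linarith
  have habs : |v / μ| ≤ 1 ↔ |v| ≤ μ := by
    rw [abs_div, abs_of_pos hμ, div_le_one hμ]
  unfold huber sat1
  rcases le_or_gt |u| μ with hu | hu <;> rcases le_or_gt |v| μ with hv | hv
  · rw [if_pos hu, if_pos hv, if_pos (habs.mpr hv)]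
    have h : u ^ 2 / (2 * μ) - (v ^ 2 / (2 * μ) + v / μ * (u - v))
        = (u - v) ^ 2 / (2 * μ) := by field_simp; ring
    nlinarith [div_nonneg (sq_nonneg (u - v)) h2μ.le]
  · rw [if_pos hu, if_neg hv.not_ge, if_neg ((not_congr habs).mpr hv.not_ge)]
    have hu' := abs_le.mp hu
    rcases lt_trichotomy v 0 with hv0 | hv0 | hv0
    · rw [Real.sign_of_neg (div_neg_of_neg_of_pos hv0 hμ), abs_of_neg hv0]
      have h : u ^ 2 / (2 * μ) - ((-v - μ / 2) + (-1) * (u - v))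
          = (u + μ) ^ 2 / (2 * μ) - v + v := by field_simp; ring
      nlinarith [div_nonneg (sq_nonneg (u + μ)) h2μ.le]
    · exfalso; rw [hv0] at hv; simp at hv; linarith
    · rw [Real.sign_of_pos (div_pos hv0 hμ), abs_of_pos hv0]
      have h : u ^ 2 / (2 * μ) - ((v - μ / 2) + 1 * (u - v))
          = (u - μ) ^ 2 / (2 * μ) := by field_simp; ring
      nlinarith [div_nonneg (sq_nonneg (u - μ)) h2μ.le]
  · rw [if_neg hu.not_ge, if_pos hv, if_pos (habs.mpr hv)]
    have hv' := abs_le.mp hv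
    rcases lt_or_ge 0 u with hu0 | hu0
    · rw [abs_of_pos hu0]
      have hua : μ < u := by rwa [abs_of_pos hu0] at hu
      have h : (u - μ / 2) - (v ^ 2 / (2 * μ) + v / μ * (u - v))
          = (μ - v) * (2 * u - μ - v) / (2 * μ) := by field_simp; ring
      have hnn : 0 ≤ (μ - v) * (2 * u - μ - v) / (2 * μ) := by
        apply div_nonneg _ h2μ.le
        apply mul_nonneg <;> linarith
      linarith
    · rw [abs_of_nonpos hu0]
      have hua : μ < -u := by rwa [abs_of_nonpos hu0] at hu
      have h : (-u - μ / 2) - (v ^ 2 / (2 * μ) + v / μ * (u - v))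
          = (μ + v) * (-2 * u - μ + v) / (2 * μ) := by field_simp; ring
      have hnn : 0 ≤ (μ + v) * (-2 * u - μ + v) / (2 * μ) := by
        apply div_nonneg _ h2μ.le
        apply mul_nonneg <;> linarith
      linarith
  · rw [if_neg hu.not_ge, if_neg hv.not_ge, if_neg ((not_congr habs).mpr hv.not_ge)]
    rcases lt_trichotomy v 0 with hv0 | hv0 | hv0
    · rw [Real.sign_of_neg (div_neg_of_neg_of_pos hv0 hμ), abs_of_neg hv0]
      have := neg_abs_le u
      linarith
    · exfalso; rw [hv0] at hv; simp at hv; linarith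
    · rw [Real.sign_of_pos (div_pos hv0 hμ), abs_of_pos hv0]
      have := le_abs_self u
      linarith

lemma sat1_key (t μ α N : ℝ) (hμ : 0 < μ) (hα : 0 < α) (hN : 0 ≤ N) :
    sat1 ((t - α * sat1 (t / (μ + α * N)) * N) / μ) = sat1 (t / (μ + α * N)) := by
  have hden : 0 < μ + α * N := by nlinarith
  by_cases h : |t / (μ + α * N)| ≤ 1
  · have hs : sat1 (t / (μ + α * N)) = t / (μ + α * N) := if_pos h
    rw [hs]
    have harg : (t - α * (t / (μ + α * N)) * N) / μ = t / (μ + α * N) := by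
      field_simp; ring
    rw [harg, sat1, if_pos h]
  · have h' : μ + α * N < |t| := by
      rw [abs_div, abs_of_pos hden, not_le, lt_div_iff₀ hden] at h
      linarith
    have hs : sat1 (t / (μ + α * N)) = Real.sign (t / (μ + α * N)) := if_neg h
    rcases lt_trichotomy t 0 with ht | ht | ht
    · rw [hs, Real.sign_of_neg (div_neg_of_neg_of_pos ht hden)]
      have htv : t < -(μ + α * N) := by rw [abs_of_neg ht] at h'; linarith
      have harg : (t - α * (-1) * N) / μ < -1 := by
        rw [div_lt_iff₀ hμ]; linarith
      rw [sat1, if_neg (by rw [abs_le]; push_neg; intro hc; linarith),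
        Real.sign_of_neg (by apply div_neg_of_neg_of_pos _ hμ; linarith)]
    · exfalso; rw [ht] at h'; simp at h'; linarith
    · rw [hs, Real.sign_of_pos (div_pos ht hden)]
      have htv : μ + α * N < t := by rwa [abs_of_pos ht] at h'
      have harg : 1 < (t - α * 1 * N) / μ := by
        rw [lt_div_iff₀ hμ]; linarith
      rw [sat1, if_neg (by rw [abs_le]; push_neg; intro hc; linarith),
        Real.sign_of_pos (by apply div_pos _ hμ; linarith)]

theorem stmt_11 {n : ℕ} (a : EuclideanSpace ℝ (Fin n)) (b α μ : ℝ)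
    (hα : 0 < α) (hμ : 0 < μ) (x : EuclideanSpace ℝ (Fin n)) :
    ∀ z : EuclideanSpace ℝ (Fin n),
      z ≠ x - (α * sat1 ((⟪a, x⟫ + b) / (μ + α * ‖a‖ ^ 2))) • a →
      (1 / 2) * ‖(x - (α * sat1 ((⟪a, x⟫ + b) / (μ + α * ‖a‖ ^ 2))) • a) - x‖ ^ 2 +
          α * huber μ (⟪a, x - (α * sat1 ((⟪a, x⟫ + b) / (μ + α * ‖a‖ ^ 2))) • a⟫ + b) <
        (1 / 2) * ‖z - x‖ ^ 2 + α * huber μ (⟪a, z⟫ + b) := by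
  intro z hz
  set t : ℝ := ⟪a, x⟫ + b with ht
  set N : ℝ := ‖a‖ ^ 2 with hN
  set s : ℝ := sat1 (t / (μ + α * N)) with hs
  set zs : EuclideanSpace ℝ (Fin n) := x - (α * s) • a with hzs
  have hNnn : (0:ℝ) ≤ N := by rw [hN]; positivity
  have hus : ⟪a, zs⟫ + b = t - α * s * N := by
    rw [hzs, inner_sub_right, inner_smul_right, real_inner_self_eq_norm_sq]
    rw [ht, hN]; ring
  -- subgradient inequality for huber at the candidate point
  have hsub := huber_subgrad μ (⟪a, z⟫ + b) (⟪a, zs⟫ + b) hμ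
  rw [hus, sat1_key t μ α N hμ hα hNnn, ← hs, ← hus] at hsub
  have hsub' : α * (huber μ (⟪a, zs⟫ + b) + s * ((⟪a, z⟫ + b) - (⟪a, zs⟫ + b)))
      ≤ α * huber μ (⟪a, z⟫ + b) := mul_le_mul_of_nonneg_left hsub hα.le
  -- norm expansion
  have hdec : z - x = (z - zs) + (zs - x) := by abel
  have hexp : ‖z - x‖ ^ 2
      = ‖z - zs‖ ^ 2 + 2 * ⟪z - zs, zs - x⟫ + ‖zs - x‖ ^ 2 := by
    rw [hdec, @norm_add_sq_real]
  have hzsx : zs - x = -((α * s) • a) := by rw [hzs]; abel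
  have hip : ⟪z - zs, zs - x⟫ = -(α * s) * ((⟪a, z⟫ + b) - (⟪a, zs⟫ + b)) := by
    rw [hzsx, inner_neg_right, inner_smul_right, real_inner_comm,
      show ⟪a, z - zs⟫ = (⟪a, z⟫ + b) - (⟪a, zs⟫ + b) by
        rw [inner_sub_right]; ring]
    ring
  have hpos : 0 < ‖z - zs‖ ^ 2 := pow_pos (norm_sub_pos_iff.mpr hz) 2
  rw [hexp, hip]
  nlinarith [hsub', hpos]
end

section
/- Let ψ_ε(e) = max(|e| − ε, 0) with ε ≥ 0 (Vapnik loss) and let g(z) = α·ψ_ε(aᵀz + b) on ℝⁿ with a ≠ 0, α > 0. Then prox_g(x) = x − α·d_{σ,ε}(aᵀx + b)·a, where σ = ε + α‖a‖² and d_{σ,ε}(e) = sign(e) if |e| > σ, 0 if |e| < ε, and (e − ε·sign(e))/(σ − ε) if ε ≤ |e| ≤ σ. -/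
/-!
The point `y = x - α d a` satisfies the optimality condition `x - y ∈ ∂g(y)` as soon as `d` is a
subgradient of `ψ_ε` at `t = aᵀy + b = aᵀx + b - α‖a‖² d`. Since the conjugate of `ψ_ε` is
`ε|d|` on `|d| ≤ 1`, it suffices that `|d| ≤ 1` and `ψ_ε(t) = d t - ε|d|` (equality in
Fenchel–Young), which a case check on the three branches of `d_{σ,ε}` confirms. Expanding
`‖z - x‖²` around `y` then shows that the objective at `z` exceeds the one at `y` by at least
`½‖z - y‖²`.
-/

open scoped RealInnerProductSpace

noncomputable def dSatDead (σ ε e : ℝ) : ℝ :=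
  if σ < |e| then Real.sign e
  else if |e| < ε then 0
  else (e - ε * Real.sign e) / (σ - ε)

def vapnikLoss (ε e : ℝ) : ℝ := max (|e| - ε) 0

lemma mul_sub_mul_abs_le_vapnikLoss (ε : ℝ) {d : ℝ} (hd : |d| ≤ 1) (s : ℝ) :
    d * s - ε * |d| ≤ vapnikLoss ε s :=
  calc d * s - ε * |d| ≤ |d| * (|s| - ε) := by
        nlinarith [abs_mul_abs_self d, abs_mul d s, le_abs_self (d * s)]
    _ ≤ |d| * vapnikLoss ε s := mul_le_mul_of_nonneg_left (le_max_left _ _) (abs_nonneg d)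
    _ ≤ vapnikLoss ε s := mul_le_of_le_one_left (le_max_right _ _) hd

lemma vapnikLoss_add_mul_le {ε d t : ℝ} (hd : |d| ≤ 1)
    (ht : vapnikLoss ε t = d * t - ε * |d|) (u : ℝ) :
    vapnikLoss ε t + d * u ≤ vapnikLoss ε (t + u) := by
  have := mul_sub_mul_abs_le_vapnikLoss ε hd (t + u)
  rw [ht]
  linarith

lemma abs_dSatDead_le_one {ε c : ℝ} (hc : 0 < c) (p : ℝ) :
    |dSatDead (ε + c) ε p| ≤ 1 := by
  unfold dSatDead
  rw [add_sub_cancel_left]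
  split_ifs with h₁ h₂
  · rcases Real.sign_apply_eq p with h | h | h <;> simp [h]
  · simp
  · push Not at h₁ h₂
    rw [abs_div, abs_of_pos hc, div_le_one hc]
    rcases lt_trichotomy p 0 with hp | rfl | hp
    · rw [Real.sign_of_neg hp, abs_of_neg hp] at *
      rw [abs_of_nonpos (by linarith)]; linarith
    · simp; linarith
    · rw [Real.sign_of_pos hp, abs_of_pos hp] at *
      rw [abs_of_nonneg (by linarith)]; linarith

lemma vapnikLoss_sub_mul_dSatDead {ε c : ℝ} (hε : 0 ≤ ε) (hc : 0 < c) (p : ℝ) :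
    vapnikLoss ε (p - c * dSatDead (ε + c) ε p) =
      dSatDead (ε + c) ε p * (p - c * dSatDead (ε + c) ε p) - ε * |dSatDead (ε + c) ε p| := by
  unfold dSatDead vapnikLoss
  rw [add_sub_cancel_left]
  split_ifs with h₁ h₂
  · rcases lt_trichotomy p 0 with hp | rfl | hp
    · rw [Real.sign_of_neg hp, abs_of_neg hp] at *
      rw [abs_of_neg (by linarith), max_eq_left (by linarith)]; simp
    · simp at h₁; linarith
    · rw [Real.sign_of_pos hp, abs_of_pos hp] at *
      rw [abs_of_pos (by linarith), max_eq_left (by linarith)]; simp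
  · simp; linarith
  · push Not at h₁ h₂
    rw [mul_div_cancel₀ _ hc.ne', sub_sub_cancel]
    rcases lt_trichotomy p 0 with hp | rfl | hp
    · rw [Real.sign_of_neg hp, abs_of_neg hp] at *
      rw [abs_of_nonpos (div_nonpos_of_nonpos_of_nonneg (by linarith) hc.le)]
      simp [abs_of_nonneg hε]
      ring
    · simp [hε]
    · rw [Real.sign_of_pos hp, abs_of_pos hp] at *
      rw [abs_of_nonneg (div_nonneg (by linarith) hc.le)]
      simp [abs_of_nonneg hε]
      ring

lemma vapnikLoss_sub_mul_dSatDead_add_mul_le {ε c : ℝ} (hε : 0 ≤ ε) (hc : 0 < c) (p u : ℝ) :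
    vapnikLoss ε (p - c * dSatDead (ε + c) ε p) + dSatDead (ε + c) ε p * u ≤
      vapnikLoss ε (p - c * dSatDead (ε + c) ε p + u) :=
  vapnikLoss_add_mul_le (abs_dSatDead_le_one hc p) (vapnikLoss_sub_mul_dSatDead hε hc p) u

theorem half_norm_sub_sq_add_comp_inner_lt {E : Type*} [NormedAddCommGroup E]
    [InnerProductSpace ℝ E] {f : ℝ → ℝ} {a x y z : E} {b α d : ℝ} (hα : 0 ≤ α)
    (hy : y = x - (α * d) • a) (hf : ∀ u, f (⟪a, y⟫ + b) + d * u ≤ f (⟪a, y⟫ + b + u))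
    (hz : z ≠ y) :
    1 / 2 * ‖y - x‖ ^ 2 + α * f (⟪a, y⟫ + b) < 1 / 2 * ‖z - x‖ ^ 2 + α * f (⟪a, z⟫ + b) := by
  have hw : 0 < ‖z - y‖ := norm_pos_iff.mpr (sub_ne_zero.mpr hz)
  have hnorm : ‖z - x‖ ^ 2 = ‖z - y‖ ^ 2 - 2 * (α * d) * ⟪a, z - y⟫ + ‖y - x‖ ^ 2 := by
    rw [← sub_add_sub_cancel z y x, norm_add_sq_real, hy, sub_sub_cancel_left, inner_neg_right,
      real_inner_smul_right, real_inner_comm]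
    ring
  have hinner : ⟪a, z⟫ + b = ⟪a, y⟫ + b + ⟪a, z - y⟫ := by
    rw [inner_sub_right]; ring
  rw [hnorm, hinner]
  nlinarith [mul_le_mul_of_nonneg_left (hf ⟪a, z - y⟫) hα]

theorem stmt_13 {n : ℕ} (a : EuclideanSpace ℝ (Fin n)) (ha : a ≠ 0)
    (b α ε : ℝ) (hα : 0 < α) (hε : 0 ≤ ε) (x : EuclideanSpace ℝ (Fin n)) :
    ∀ z : EuclideanSpace ℝ (Fin n),
      z ≠ x - (α * dSatDead (ε + α * ‖a‖ ^ 2) ε (⟪a, x⟫ + b)) • a →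
      (1 / 2) * ‖(x - (α * dSatDead (ε + α * ‖a‖ ^ 2) ε (⟪a, x⟫ + b)) • a) - x‖ ^ 2 +
          α * max (|⟪a, x - (α * dSatDead (ε + α * ‖a‖ ^ 2) ε (⟪a, x⟫ + b)) • a⟫ + b| - ε) 0 <
        (1 / 2) * ‖z - x‖ ^ 2 + α * max (|⟪a, z⟫ + b| - ε) 0 := by
  intro z hz
  have hc : 0 < α * ‖a‖ ^ 2 := by positivity
  set d := dSatDead (ε + α * ‖a‖ ^ 2) ε (⟪a, x⟫ + b)
  have hstep : ⟪a, x - (α * d) • a⟫ + b = ⟪a, x⟫ + b - α * ‖a‖ ^ 2 * d := by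
    rw [inner_sub_right, real_inner_smul_right, real_inner_self_eq_norm_sq]; ring
  refine half_norm_sub_sq_add_comp_inner_lt (f := vapnikLoss ε) hα.le rfl (fun u => ?_) hz
  rw [hstep]
  exact vapnikLoss_sub_mul_dSatDead_add_mul_le hε hc _ u
end

section
/- Consider g(z, φ) = (λ/2)(aᵀz + b − φ)² + γ|φ| on ℝⁿ × ℝ with a ≠ 0, λ > 0, γ > 0. The unique minimizer (z*, φ*) of (z, φ) ↦ ½‖z − x‖² + g(z, φ) is z* = x − γ·Sat₁(ρ(x))·a and φ* = η·dz₁(ρ(x)), where η = γ(1/λ + ‖a‖²), ρ(x) = (aᵀx + b)/η, and dz₁(t) = t − Sat₁(t) is the deadzone function. -/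
open scoped RealInnerProductSpace

noncomputable def dz1 (t : ℝ) : ℝ := t - sat1 t

set_option maxHeartbeats 4000000 in
theorem stmt_14 {n : ℕ} (a : EuclideanSpace ℝ (Fin n)) (ha : a ≠ 0)
    (b lam gam : ℝ) (hlam : 0 < lam) (hgam : 0 < gam)
    (x : EuclideanSpace ℝ (Fin n)) :
    ∀ p : EuclideanSpace ℝ (Fin n) × ℝ,
      p ≠ (x - (gam * sat1 ((⟪a, x⟫ + b) / (gam * (1 / lam + ‖a‖ ^ 2)))) • a,
            gam * (1 / lam + ‖a‖ ^ 2) * dz1 ((⟪a, x⟫ + b) / (gam * (1 / lam + ‖a‖ ^ 2)))) →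
      (1 / 2) * ‖(x - (gam * sat1 ((⟪a, x⟫ + b) / (gam * (1 / lam + ‖a‖ ^ 2)))) • a) - x‖ ^ 2 +
          (lam / 2) * (⟪a, x - (gam * sat1 ((⟪a, x⟫ + b) / (gam * (1 / lam + ‖a‖ ^ 2)))) • a⟫ + b -
              gam * (1 / lam + ‖a‖ ^ 2) * dz1 ((⟪a, x⟫ + b) / (gam * (1 / lam + ‖a‖ ^ 2)))) ^ 2 +
          gam * |gam * (1 / lam + ‖a‖ ^ 2) * dz1 ((⟪a, x⟫ + b) / (gam * (1 / lam + ‖a‖ ^ 2)))| <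
        (1 / 2) * ‖p.1 - x‖ ^ 2 + (lam / 2) * (⟪a, p.1⟫ + b - p.2) ^ 2 + gam * |p.2| := by
  intro p hp
  have hna : (0:ℝ) < ‖a‖ := norm_pos_iff.mpr ha
  set A : ℝ := ‖a‖ ^ 2 with hAdef
  have hA : (0:ℝ) < A := by positivity
  set c : ℝ := ⟪a, x⟫ with hcdef
  set η : ℝ := gam * (1 / lam + A) with hηdef
  have hη : (0:ℝ) < η := by
    have : (0:ℝ) < 1 / lam + A := by positivity
    positivity
  set ρ : ℝ := (c + b) / η with hρdef
  set s : ℝ := sat1 ρ with hsdef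
  set φs : ℝ := η * dz1 ρ with hφsdef
  clear_value A c η ρ s φs
  have hcb : c + b = ρ * η := by rw [hρdef]; field_simp
  -- basic facts about s and φs
  have hs1 : |s| ≤ 1 := by
    rw [hsdef, sat1]
    split_ifs with h
    · exact h
    · rcases lt_trichotomy ρ 0 with h1 | h1 | h1
      · rw [Real.sign_of_neg h1]; norm_num
      · rw [h1, Real.sign_zero]; norm_num
      · rw [Real.sign_of_pos h1]; norm_num
  have hφs' : φs = c + b - η * s := by
    rw [hφsdef, dz1, mul_sub, hρdef, mul_div_cancel₀ _ (ne_of_gt hη), ← hρdef, ← hsdef]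
  have habs : |φs| = s * φs := by
    rcases le_or_gt (|ρ|) 1 with h | h
    · have hs : s = ρ := by rw [hsdef, sat1, if_pos h]
      have h0 : φs = 0 := by rw [hφs', hs, hcb]; ring
      simp [h0]
    · rcases lt_or_ge ρ 0 with hρ0 | hρ0
      · have hs : s = -1 := by
          rw [hsdef, sat1, if_neg (not_le.mpr h), Real.sign_of_neg hρ0]
        have h2 : ρ < -1 := by
          rcases abs_cases ρ with ⟨h3, _⟩ | ⟨h3, _⟩ <;> linarith
        have hφneg : φs < 0 := by rw [hφs', hs, hcb]; nlinarith
        rw [abs_of_neg hφneg, hs]; ring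
      · have hρpos : (0:ℝ) < ρ := by
          rcases abs_cases ρ with ⟨h3, _⟩ | ⟨h3, _⟩ <;> linarith
        have hs : s = 1 := by
          rw [hsdef, sat1, if_neg (not_le.mpr h), Real.sign_of_pos hρpos]
        have h2 : (1:ℝ) < ρ := by
          rcases abs_cases ρ with ⟨h3, _⟩ | ⟨h3, _⟩ <;> linarith
        have hφpos : (0:ℝ) ≤ φs := by rw [hφs', hs, hcb]; nlinarith
        rw [abs_of_nonneg hφpos, hs]; ring
  -- compute the LHS pieces
  have e1 : ‖(x - (gam * s) • a) - x‖ ^ 2 = (gam * s) ^ 2 * A := by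
    have h0 : (x - (gam * s) • a) - x = -((gam * s) • a) := by abel
    rw [h0, norm_neg, norm_smul, mul_pow, hAdef]
    rw [Real.norm_eq_abs, sq_abs]
  have e2 : ⟪a, x - (gam * s) • a⟫ = c - gam * s * A := by
    rw [inner_sub_right, real_inner_smul_right, ← hcdef, real_inner_self_eq_norm_sq, ← hAdef]
  -- decompose p.1
  set z := p.1 with hzdef
  set φ := p.2 with hφdef
  set t : ℝ := ⟪a, z - x⟫ with htdef
  have e3 : ⟪a, z⟫ = c + t := by
    rw [htdef, inner_sub_right, ← hcdef]; ring
  set w := (z - x) - (t / A) • a with hwdef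
  clear_value z φ t w
  have e4 : ‖z - x‖ ^ 2 = ‖w‖ ^ 2 + t ^ 2 / A := by
    have hzw : z - x = w + (t / A) • a := by rw [hwdef]; abel
    have hwa : ⟪w, (t / A) • a⟫ = 0 := by
      rw [real_inner_smul_right, hwdef, inner_sub_left, real_inner_smul_left,
        real_inner_comm a, ← htdef, real_inner_self_eq_norm_sq, ← hAdef,
        div_mul_cancel₀ _ (ne_of_gt hA)]
      ring
    rw [hzw, norm_add_sq_real, hwa, norm_smul, mul_pow]
    have h5 : ‖t / A‖ ^ 2 = t ^ 2 / A ^ 2 := by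
      rw [Real.norm_eq_abs, sq_abs, div_pow]
    rw [h5, hAdef]
    field_simp
    ring
  -- key algebraic identity
  have key : (1/2) * (‖w‖ ^ 2 + t ^ 2 / A) + (lam/2) * (c + t + b - φ) ^ 2 + gam * |φ|
      - ((1/2) * ((gam * s) ^ 2 * A) + (lam/2) * (c - gam * s * A + b - φs) ^ 2 + gam * (s * φs))
      = ‖w‖ ^ 2 / 2 + (gam * |φ| - gam * (s * φ))
        + (t + gam * s * A) ^ 2 / (2 * A)
        + (lam / 2) * ((t + gam * s * A) - (φ - φs)) ^ 2 := by
    rw [hφs', hηdef]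
    field_simp
    ring
  have hnn1 : (0:ℝ) ≤ ‖w‖ ^ 2 := by positivity
  have hnn2 : (0:ℝ) ≤ gam * |φ| - gam * (s * φ) := by
    have h6 : s * φ ≤ |φ| :=
      calc s * φ ≤ |s * φ| := le_abs_self _
        _ = |s| * |φ| := abs_mul _ _
        _ ≤ 1 * |φ| := mul_le_mul_of_nonneg_right hs1 (abs_nonneg φ)
        _ = |φ| := one_mul _
    nlinarith
  have hnn3 : (0:ℝ) ≤ (t + gam * s * A) ^ 2 / (2 * A) := by positivity
  have hnn4 : (0:ℝ) ≤ (lam / 2) * ((t + gam * s * A) - (φ - φs)) ^ 2 := by positivity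
  -- the strict part
  have hpos : (0:ℝ) < ‖w‖ ^ 2 + (t + gam * s * A) ^ 2 / (2 * A)
      + (lam / 2) * ((t + gam * s * A) - (φ - φs)) ^ 2 := by
    by_cases hφe : φ = φs
    · by_cases hte : t = -(gam * s * A)
      · have hz1 : z ≠ x - (gam * s) • a := by
          intro h
          refine hp (Prod.ext_iff.mpr ⟨?_, ?_⟩)
          · rw [← hzdef]; exact h
          · rw [← hφdef]; exact hφe
        have hweq : w = z - (x - (gam * s) • a) := by
          rw [hwdef, hte]
          have h7 : (-(gam * s * A) / A) = -(gam * s) := by field_simp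
          rw [h7]
          module
        have hw0 : w ≠ 0 := by rw [hweq]; exact sub_ne_zero.mpr hz1
        have h8 : 0 < ‖w‖ ^ 2 := by
          have := norm_pos_iff.mpr hw0
          positivity
        nlinarith
      · have h9 : t + gam * s * A ≠ 0 := fun h => hte (by linarith)
        have h10 : 0 < (t + gam * s * A) ^ 2 / (2 * A) := by positivity
        nlinarith
    · by_cases hte : t + gam * s * A = 0
      · have h11 : (t + gam * s * A) - (φ - φs) ≠ 0 := by
          rw [hte]
          intro h
          exact hφe (by linarith [(sub_eq_zero.mp (by linarith : φ - φs - 0 = 0))])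
        have h12 : 0 < (lam / 2) * ((t + gam * s * A) - (φ - φs)) ^ 2 := by positivity
        linarith [hnn1, hnn3, h12]
      · have h13 : 0 < (t + gam * s * A) ^ 2 / (2 * A) := by positivity
        linarith [hnn1, hnn4, h13]
  rw [e1, e2, e4, e3, habs]
  linarith [key, hnn1, hnn2, hnn3, hnn4, hpos]
end

section
/- Scalar fixed point for saturation: given real numbers c, μ > 0, β > 0, the unique r ∈ ℝ satisfying r = Sat₁((c − βr)/μ) is r = Sat₁(c/(μ + β)). -/
lemma sat1_eq (x : ℝ) : sat1 x = max (-1) (min 1 x) := by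
  unfold sat1
  rcases le_or_gt |x| 1 with h | h
  · rw [if_pos h]
    rw [abs_le] at h
    rw [min_eq_right h.2, max_eq_right h.1]
  · rw [if_neg (not_le.mpr h)]
    rcases lt_abs.mp h with h1 | h1
    · rw [Real.sign_of_pos (by linarith), min_eq_left h1.le]
      norm_num
    · rw [Real.sign_of_neg (by linarith), min_eq_right (by linarith),
        max_eq_left (by linarith)]

lemma sat1_mono : Monotone sat1 := by
  intro a b hab
  rw [sat1_eq, sat1_eq]
  gcongr

theorem stmt_16 (c μ β : ℝ) (hμ : 0 < μ) (hβ : 0 < β) :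
    ∀ r : ℝ, r = sat1 ((c - β * r) / μ) ↔ r = sat1 (c / (μ + β)) := by
  have hμβ : 0 < μ + β := by linarith
  set s := sat1 (c / (μ + β)) with hs
  have hfix : sat1 ((c - β * s) / μ) = s := by
    rcases le_or_gt |c / (μ + β)| 1 with h | h
    · have hs' : s = c / (μ + β) := by rw [hs]; unfold sat1; rw [if_pos h]
      rw [hs']
      have heq : (c - β * (c / (μ + β))) / μ = c / (μ + β) := by
        field_simp; ring
      rw [heq]
      unfold sat1; rw [if_pos h]
    · rcases lt_abs.mp h with h1 | h1
      · have hc : μ + β < c := by rwa [lt_div_iff₀ hμβ, one_mul] at h1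
        have hs' : s = 1 := by
          rw [hs]; unfold sat1
          rw [if_neg (not_le.mpr h), Real.sign_of_pos (by positivity)]
        rw [hs', mul_one]
        have h2 : 1 < (c - β) / μ := by rw [lt_div_iff₀ hμ, one_mul]; linarith
        unfold sat1
        rw [if_neg (not_le.mpr (lt_abs.mpr (Or.inl h2))),
          Real.sign_of_pos (by linarith)]
      · have hc : c < -(μ + β) := by
          rw [← neg_div] at h1
          have := (lt_div_iff₀ hμβ).mp h1
          linarith
        have hcd : c / (μ + β) < 0 := div_neg_of_neg_of_pos (by linarith) hμβ
        have hs' : s = -1 := by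
          rw [hs]; unfold sat1
          rw [if_neg (not_le.mpr h), Real.sign_of_neg hcd]
        rw [hs']
        have h2 : (c - β * (-1)) / μ < -1 := by
          rw [div_lt_iff₀ hμ]; linarith
        unfold sat1
        rw [if_neg (not_le.mpr (lt_abs.mpr (Or.inr (by linarith)))),
          Real.sign_of_neg (by linarith : (c - β * (-1)) / μ < 0)]
  intro r
  constructor
  · intro hr
    rcases lt_trichotomy r s with h | h | h
    · exfalso
      have hle : s ≤ r := by
        calc s = sat1 ((c - β * s) / μ) := hfix.symm
          _ ≤ sat1 ((c - β * r) / μ) := by apply sat1_mono; gcongr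
          _ = r := hr.symm
      linarith
    · exact h
    · exfalso
      have hle : r ≤ s := by
        calc r = sat1 ((c - β * r) / μ) := hr
          _ ≤ sat1 ((c - β * s) / μ) := by apply sat1_mono; gcongr
          _ = s := hfix
      linarith
  · intro hr
    rw [hr, hfix]
end

section
/- One-step error decrease inequality: let W₀, W₁ ∈ ℝ^{n×n} be symmetric positive definite, A ∈ ℝ^{n×n}, and g : ℝⁿ → ℝ convex nonnegative with g(0) = 0. Suppose e₁ = A e₀ − W₁² ξ with ξ ∈ ∂g(e₁). Then, with F_i(e) = eᵀW_i⁻²e, one has F₁(e₁) − F₀(e₀) ≤ e₀ᵀ(AᵀW₁⁻²A − W₀⁻²)e₀ − 2g(e₁) − ξᵀW₁²ξ. -/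
open Matrix

theorem stmt_18 {n : ℕ} (W₀ W₁ A : Matrix (Fin n) (Fin n) ℝ)
    (hW₀ : W₀.PosDef) (hW₁ : W₁.PosDef)
    (g : (Fin n → ℝ) → ℝ) (hconv : ConvexOn ℝ Set.univ g)
    (hnonneg : ∀ z, 0 ≤ g z) (hg0 : g 0 = 0)
    (e₀ e₁ ξ : Fin n → ℝ)
    (he : e₁ = A.mulVec e₀ - (W₁ * W₁).mulVec ξ)
    (hξ : ∀ z : Fin n → ℝ, g z - g e₁ ≥ ξ ⬝ᵥ (z - e₁)) :
    e₁ ⬝ᵥ (W₁⁻¹ * W₁⁻¹).mulVec e₁ - e₀ ⬝ᵥ (W₀⁻¹ * W₀⁻¹).mulVec e₀ ≤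
      e₀ ⬝ᵥ ((Aᵀ * (W₁⁻¹ * W₁⁻¹) * A - W₀⁻¹ * W₀⁻¹).mulVec e₀)
        - 2 * g e₁ - ξ ⬝ᵥ (W₁ * W₁).mulVec ξ := by
  have hWs : W₁ᵀ = W₁ := hW₁.1
  have hdet : IsUnit W₁.det := isUnit_iff_ne_zero.mpr hW₁.det_pos.ne'
  have hinv : W₁⁻¹ * W₁ = 1 := Matrix.nonsing_inv_mul W₁ hdet
  have hinv' : W₁ * W₁⁻¹ = 1 := Matrix.mul_nonsing_inv W₁ hdet
  set B := W₁⁻¹ * W₁⁻¹ with hB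
  set C := W₁ * W₁ with hC
  have hBC : B * C = 1 := by
    rw [hB, hC, Matrix.mul_assoc, ← Matrix.mul_assoc W₁⁻¹ W₁ W₁, hinv,
      Matrix.one_mul, hinv]
  have hCB : C * B = 1 := by
    rw [hB, hC, Matrix.mul_assoc, ← Matrix.mul_assoc W₁ W₁⁻¹ W₁⁻¹, hinv',
      Matrix.one_mul, hinv']
  have hCs : Cᵀ = C := by rw [hC, Matrix.transpose_mul, hWs]
  -- subgradient at 0
  have hsub := hξ 0
  rw [hg0] at hsub
  have hge : g e₁ ≤ ξ ⬝ᵥ e₁ := by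
    simp only [zero_sub, dotProduct_neg, dotProduct_sub] at hsub
    linarith
  set u := A.mulVec e₀ with hu
  have hvm : C.mulVec ξ = ξ ᵥ* C := by
    nth_rewrite 1 [← hCs]; exact Matrix.mulVec_transpose C ξ
  have hBCv : B.mulVec (C.mulVec ξ) = ξ := by
    rw [Matrix.mulVec_mulVec, hBC, Matrix.one_mulVec]
  -- key algebraic identity
  have h1 : e₁ ⬝ᵥ B.mulVec e₁
      = u ⬝ᵥ B.mulVec u - 2 * (ξ ⬝ᵥ u) + ξ ⬝ᵥ C.mulVec ξ := by
    rw [he]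
    rw [Matrix.mulVec_sub, dotProduct_sub, sub_dotProduct, sub_dotProduct, hBCv]
    have h2 : (C.mulVec ξ) ⬝ᵥ B.mulVec u = ξ ⬝ᵥ u := by
      rw [Matrix.dotProduct_mulVec, hvm, Matrix.vecMul_vecMul, hCB,
        Matrix.vecMul_one]
    have h3 : (C.mulVec ξ) ⬝ᵥ ξ = ξ ⬝ᵥ C.mulVec ξ := dotProduct_comm _ _
    rw [h2, h3, dotProduct_comm u ξ]
    ring
  have h4 : u ⬝ᵥ B.mulVec u = e₀ ⬝ᵥ (Aᵀ * B * A).mulVec e₀ := by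
    conv_rhs => rw [Matrix.mul_assoc, ← Matrix.mulVec_mulVec,
      Matrix.dotProduct_mulVec e₀ Aᵀ, Matrix.vecMul_transpose,
      ← Matrix.mulVec_mulVec]
  have h5 : ξ ⬝ᵥ u = ξ ⬝ᵥ e₁ + ξ ⬝ᵥ C.mulVec ξ := by
    have : u = e₁ + C.mulVec ξ := by rw [he]; ring
    rw [this, dotProduct_add]
  rw [Matrix.sub_mulVec, dotProduct_sub]
  linarith [h1, h4, h5, hge]
end
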